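/- Let x̃ be a minimizer of ‖Kx - y‖² over {x : ‖x‖₁ ≤ ρ} for some ρ > 0, and set λ = maxᵢ |(Kᵀ(y - Kx̃))ᵢ|. Then x̃ minimizes F_λ(x) = ‖Kx - y‖² + 2λ‖x‖₁ over all of ℝ^p. -/
import Mathlib

open Finset Filter

/-- scalar soft-thresholding -/
noncomputable def softS (lam u : ℝ) : ℝ := Real.sign u * max (|u| - lam) 0

/-- componentwise soft-thresholding on ℝ^p -/
noncomputable def softV {p : ℕ} (lam : ℝ) (u : Fin p → ℝ) : Fin p → ℝ :=
  fun i => softS lam (u i)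

/-- Euclidean norm on ℝ^n -/
noncomputable def norm2 {n : ℕ} (v : Fin n → ℝ) : ℝ := Real.sqrt (∑ i, (v i) ^ 2)

/-- ℓ¹ norm on ℝ^n -/
noncomputable def normOne {n : ℕ} (v : Fin n → ℝ) : ℝ := ∑ i, |v i|

/-- the ℓ¹-penalized least-squares functional -/
noncomputable def Fl {m p : ℕ} (K : Matrix (Fin m) (Fin p) ℝ) (y : Fin m → ℝ)
    (lam : ℝ) (x : Fin p → ℝ) : ℝ :=
  (norm2 (K.mulVec x - y)) ^ 2 + 2 * lam * normOne x

lemma norm2_sq {n : ℕ} (v : Fin n → ℝ) : (norm2 v)^2 = ∑ i, (v i)^2 := by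
  rw [norm2, Real.sq_sqrt]; positivity

lemma swap_sum {m p : ℕ} (K : Matrix (Fin m) (Fin p) ℝ) (a : Fin m → ℝ) (d : Fin p → ℝ) :
    ∑ j, a j * (K.mulVec d j) = ∑ i, (K.transpose.mulVec a i) * d i := by
  simp only [Matrix.mulVec, dotProduct, Matrix.transpose_apply, Finset.mul_sum,
    Finset.sum_mul]
  rw [Finset.sum_comm]
  refine Finset.sum_congr rfl fun i _ => Finset.sum_congr rfl fun j _ => by ring

lemma mySignMulSelf (u : ℝ) : Real.sign u * u = |u| := by
  rcases lt_trichotomy u 0 with h | h | h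
  · rw [Real.sign_of_neg h, abs_of_neg h]; ring
  · simp [h]
  · rw [Real.sign_of_pos h, abs_of_pos h]; ring

lemma abs_sign_le (u : ℝ) : |Real.sign u| ≤ 1 := by
  rcases lt_trichotomy u 0 with h | h | h
  · rw [Real.sign_of_neg h]; norm_num
  · simp [h]
  · rw [Real.sign_of_pos h]; norm_num

/-- quadratic expansion -/
lemma expandS {m p : ℕ} (K : Matrix (Fin m) (Fin p) ℝ) (y : Fin m → ℝ)
    (xt x : Fin p → ℝ) :
    ∑ j, (K.mulVec x j - y j)^2 =
      ∑ j, (K.mulVec xt j - y j)^2 + ∑ j, (K.mulVec (x - xt) j)^2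
        + 2 * ∑ j, (K.mulVec xt j - y j) * K.mulVec (x - xt) j := by
  have h : ∀ j, K.mulVec x j = K.mulVec xt j + K.mulVec (x - xt) j := by
    intro j
    have : K.mulVec x = K.mulVec xt + K.mulVec (x - xt) := by
      rw [← Matrix.mulVec_add]
      ext i; simp
    rw [this]; rfl
  calc ∑ j, (K.mulVec x j - y j)^2
      = ∑ j, ((K.mulVec xt j - y j)^2 + (K.mulVec (x - xt) j)^2
          + 2 * ((K.mulVec xt j - y j) * K.mulVec (x - xt) j)) := by
        refine Finset.sum_congr rfl fun j _ => ?_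
        rw [h j]; ring
    _ = _ := by rw [Finset.sum_add_distrib, Finset.sum_add_distrib, Finset.mul_sum]

theorem constrained_to_penalized {m p : ℕ} (K : Matrix (Fin m) (Fin p) ℝ)
    (y : Fin m → ℝ) (rho : ℝ) (hrho : 0 < rho) (xt : Fin p → ℝ)
    (hxt : normOne xt ≤ rho)
    (hmin : ∀ x : Fin p → ℝ, normOne x ≤ rho →
      (norm2 (K.mulVec xt - y)) ^ 2 ≤ (norm2 (K.mulVec x - y)) ^ 2)
    (lam : ℝ)
    (hlam : IsGreatest (Set.range fun i => |K.transpose.mulVec (y - K.mulVec xt) i|) lam) :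
    ∀ x : Fin p → ℝ, Fl K y lam xt ≤ Fl K y lam x := by
  set v : Fin p → ℝ := K.transpose.mulVec (y - K.mulVec xt) with hv
  have hvle : ∀ i, |v i| ≤ lam := fun i => hlam.2 ⟨i, rfl⟩
  obtain ⟨i₀, hi₀⟩ := hlam.1
  have hlam0 : 0 ≤ lam := hi₀ ▸ abs_nonneg _
  -- the cross term identity: ∑ j, (K xt - y) j * (K d) j = - ∑ i, v i * d i
  have cross : ∀ d : Fin p → ℝ,
      ∑ j, (K.mulVec xt j - y j) * K.mulVec d j = - ∑ i, v i * d i := by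
    intro d
    have : ∑ j, ((K.mulVec xt - y) j) * K.mulVec d j
        = ∑ i, (K.transpose.mulVec (K.mulVec xt - y) i) * d i := swap_sum K _ d
    have h2 : K.transpose.mulVec (K.mulVec xt - y) = -v := by
      rw [hv, ← Matrix.mulVec_neg]
      ext j; simp
    simp only [Pi.sub_apply] at this
    rw [this, h2, ← Finset.sum_neg_distrib]
    refine Finset.sum_congr rfl fun i _ => by simp [mul_comm]
  -- S notation
  have hS : ∀ z : Fin p → ℝ, (norm2 (K.mulVec z - y))^2 = ∑ j, (K.mulVec z j - y j)^2 := by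
    intro z; rw [norm2_sq]; rfl
  -- first-order optimality
  have stepA : ∀ z : Fin p → ℝ, normOne z ≤ rho → ∑ i, v i * z i ≤ ∑ i, v i * xt i := by
    intro z hz
    set d : Fin p → ℝ := z - xt with hd
    set C : ℝ := ∑ j, (K.mulVec d j)^2 with hC
    set D : ℝ := ∑ i, v i * d i with hD
    have hC0 : 0 ≤ C := Finset.sum_nonneg fun j _ => sq_nonneg _
    have key : ∀ t : ℝ, 0 < t → t ≤ 1 → 0 ≤ t^2 * C - 2 * t * D := by
      intro t ht0 ht1
      set w : Fin p → ℝ := xt + t • d with hw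
      have hfeas : normOne w ≤ rho := by
        have : ∀ i, |w i| ≤ (1 - t) * |xt i| + t * |z i| := by
          intro i
          have : w i = (1 - t) * xt i + t * z i := by
            simp [hw, hd]; ring
          rw [this]
          calc |(1 - t) * xt i + t * z i| ≤ |(1 - t) * xt i| + |t * z i| := abs_add_le _ _
            _ = (1 - t) * |xt i| + t * |z i| := by
                rw [abs_mul, abs_mul, abs_of_nonneg (by linarith), abs_of_nonneg ht0.le]
        calc normOne w ≤ ∑ i, ((1 - t) * |xt i| + t * |z i|) :=
              Finset.sum_le_sum fun i _ => this i
          _ = (1 - t) * normOne xt + t * normOne z := by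
              rw [Finset.sum_add_distrib, ← Finset.mul_sum, ← Finset.mul_sum]; rfl
          _ ≤ (1 - t) * rho + t * rho := by
              have h1 : (0:ℝ) ≤ 1 - t := by linarith
              exact add_le_add (mul_le_mul_of_nonneg_left hxt h1)
                (mul_le_mul_of_nonneg_left hz ht0.le)
          _ = rho := by ring
      have hmin' := hmin w hfeas
      rw [hS, hS] at hmin'
      have hwd : w - xt = t • d := by ext i; simp [hw]
      have := expandS K y xt w
      rw [hwd] at this
      have hsq : ∑ j, (K.mulVec (t • d) j)^2 = t^2 * C := by
        rw [hC, Finset.mul_sum]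
        refine Finset.sum_congr rfl fun j _ => ?_
        rw [Matrix.mulVec_smul]
        simp [smul_eq_mul]; ring
      have hcr : ∑ j, (K.mulVec xt j - y j) * K.mulVec (t • d) j = - (t * D) := by
        rw [cross (t • d)]
        have h9 : ∑ i, v i * (t • d) i = t * D := by
          rw [hD, Finset.mul_sum]
          exact Finset.sum_congr rfl fun i _ => by simp [smul_eq_mul]; ring
        rw [h9]
      rw [hsq, hcr] at this
      nlinarith [hmin', this]
    have hDle : D ≤ 0 := by
      by_contra hDpos
      push_neg at hDpos
      have h1 := key 1 one_pos le_rfl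
      have hC2D : 2 * D ≤ C := by nlinarith
      have hCpos : 0 < C := by nlinarith
      have ht0 : 0 < D / C := div_pos hDpos hCpos
      have ht1 : D / C ≤ 1 := by
        rw [div_le_one hCpos]; linarith
      have h2 := key (D / C) ht0 ht1
      have : (D / C)^2 * C - 2 * (D / C) * D = - (D^2 / C) := by
        field_simp; ring
      rw [this] at h2
      nlinarith [sq_nonneg D, div_pos (by positivity : (0:ℝ) < D^2) hCpos]
    have : ∑ i, v i * z i - ∑ i, v i * xt i = D := by
      rw [hD, ← Finset.sum_sub_distrib]
      refine Finset.sum_congr rfl fun i _ => by simp [hd]; ring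
    linarith
  -- step B: rho * lam ≤ ⟨v, xt⟩
  have stepB : rho * lam ≤ ∑ i, v i * xt i := by
    set z : Fin p → ℝ := fun j => if j = i₀ then rho * Real.sign (v i₀) else 0 with hz
    simp only at hi₀
    have hzn : normOne z ≤ rho := by
      have h1 : normOne z = |rho * Real.sign (v i₀)| := by
        simp [normOne, hz, apply_ite abs, Finset.sum_ite_eq']
      rw [h1, abs_mul, abs_of_pos hrho]
      calc rho * |Real.sign (v i₀)| ≤ rho * 1 :=
          mul_le_mul_of_nonneg_left (abs_sign_le _) hrho.le
        _ = rho := mul_one rho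
    have hvz : ∑ i, v i * z i = rho * lam := by
      have h1 : ∑ i, v i * z i = v i₀ * (rho * Real.sign (v i₀)) := by
        simp [hz, mul_ite, Finset.sum_ite_eq']
      rw [h1, ← hi₀, ← mySignMulSelf (v i₀)]; ring
    calc rho * lam = ∑ i, v i * z i := hvz.symm
      _ ≤ ∑ i, v i * xt i := stepA z hzn
  -- step C: ⟨v, x⟩ ≤ lam * ‖x‖₁
  have stepC : ∀ x : Fin p → ℝ, ∑ i, v i * x i ≤ lam * normOne x := by
    intro x
    calc ∑ i, v i * x i ≤ ∑ i, |v i * x i| :=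
        Finset.sum_le_sum fun i _ => le_abs_self _
      _ = ∑ i, |v i| * |x i| := by
          refine Finset.sum_congr rfl fun i _ => abs_mul _ _
      _ ≤ ∑ i, lam * |x i| :=
          Finset.sum_le_sum fun i _ => mul_le_mul_of_nonneg_right (hvle i) (abs_nonneg _)
      _ = lam * normOne x := by rw [normOne, Finset.mul_sum]
  -- conclusion
  intro x
  have hexp := expandS K y xt x
  have hcr := cross (x - xt)
  have hCx : 0 ≤ ∑ j, (K.mulVec (x - xt) j)^2 := Finset.sum_nonneg fun j _ => sq_nonneg _
  have hsub : ∑ i, v i * (x - xt) i = ∑ i, v i * x i - ∑ i, v i * xt i := by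
    rw [← Finset.sum_sub_distrib]
    refine Finset.sum_congr rfl fun i _ => by simp; ring
  have hxtb : lam * normOne xt ≤ rho * lam := by
    calc lam * normOne xt ≤ lam * rho := mul_le_mul_of_nonneg_left hxt hlam0
      _ = rho * lam := mul_comm _ _
  have hCx' := stepC x
  rw [Fl, Fl, hS, hS]
  rw [hsub] at hcr
  linarith [stepB]
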